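/- Let σ₀ > 0, h ≥ 0, D > 0, c ≥ 0, and suppose (P, L, ς, η, a, b, g, ρ) satisfies: L ≥ 1, 0 ≤ P, exp(ς) ≤ L, exp(η) ≤ σ₀ + P·h, P·h ≤ exp(a), 2σ₀ + P·h ≤ exp(b), P ≤ exp(g), L ≤ exp(ρ), and the relaxed rate constraint log₂(1 + P·h/σ₀) - c·√2·exp(a/2 + b/2 - η - ς/2) ≥ D/L. Then, with γ = P·h/σ₀, the original rate constraint log₂(1+γ) - c·√(2γ(γ+2)) / (√L·(1+γ)) ≥ D/L holds, and the energy objective satisfies P·L ≤ exp(g + ρ). In other words, every feasible point of the relaxed problem RP yields a feasible point of the power–blocklength problem SP1 whose objective P·L is upper bounded by exp(g + ρ). -/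

import Mathlib

/-!
With `x = P·h` and `γ = x/σ₀`, the dispersion term equals `√2·√x·√(x + 2σ₀) / (√L·(σ₀ + x))`.
The auxiliary constraints of RP bound each factor by an exponential: `√x ≤ e^{a/2}`,
`√(x + 2σ₀) ≤ e^{b/2}`, `√L ≥ e^{ς/2}` and `σ₀ + x ≥ e^η`. Hence the dispersion term is at most
`√2·e^{a/2 + b/2 - η - ς/2}`, so the relaxed rate `R̃` is a lower bound of `R`.
-/

open Real

lemma sqrt_le_exp_half {x t : ℝ} (h : x ≤ exp t) : √x ≤ exp (t / 2) :=
  exp_half t ▸ sqrt_le_sqrt h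

lemma exp_half_le_sqrt {x t : ℝ} (h : exp t ≤ x) : exp (t / 2) ≤ √x :=
  exp_half t ▸ sqrt_le_sqrt h

lemma sqrt_snr_dispersion_div_eq {σ x : ℝ} (hσ : 0 < σ) (hx : 0 ≤ x) (L : ℝ) :
    √(2 * (x / σ) * (x / σ + 2)) / (√L * (1 + x / σ)) =
      √2 * √x * √(x + 2 * σ) / (√L * (σ + x)) := by
  have hsplit : 2 * (x / σ) * (x / σ + 2) = 2 * x * (x + 2 * σ) / σ ^ 2 := by
    field_simp
  rw [hsplit, sqrt_div' _ (sq_nonneg σ), sqrt_sq hσ.le, sqrt_mul (by positivity),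
    sqrt_mul zero_le_two]
  field_simp

lemma sqrt_snr_dispersion_div_le_exp {σ x L ς η a b : ℝ} (hσ : 0 < σ) (hx : 0 ≤ x)
    (hς : exp ς ≤ L) (hη : exp η ≤ σ + x) (ha : x ≤ exp a) (hb : 2 * σ + x ≤ exp b) :
    √(2 * (x / σ) * (x / σ + 2)) / (√L * (1 + x / σ)) ≤
      √2 * exp (a / 2 + b / 2 - η - ς / 2) := by
  rw [sqrt_snr_dispersion_div_eq hσ hx, sub_sub, exp_sub, exp_add, exp_add, mul_assoc √2,
    mul_div_assoc, mul_comm (exp η)]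
  gcongr
  · exact sqrt_le_exp_half ha
  · exact sqrt_le_exp_half (by linarith)
  · exact exp_half_le_sqrt hς

theorem rp_feasible_implies_sp1_feasible_general
    (σ₀ h D c P L ς η a b g ρ : ℝ)
    (hσ₀ : 0 < σ₀) (hh : 0 ≤ h) (hc : 0 ≤ c)
    (hP : 0 ≤ P)
    (hς : Real.exp ς ≤ L)
    (hη : Real.exp η ≤ σ₀ + P * h)
    (ha : P * h ≤ Real.exp a)
    (hb : 2 * σ₀ + P * h ≤ Real.exp b)
    (hg : P ≤ Real.exp g)
    (hρ : L ≤ Real.exp ρ)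
    (hrate : Real.logb 2 (1 + P * h / σ₀) -
        c * Real.sqrt 2 * Real.exp (a / 2 + b / 2 - η - ς / 2) ≥ D / L) :
    (Real.logb 2 (1 + P * h / σ₀) -
        c * Real.sqrt (2 * (P * h / σ₀) * (P * h / σ₀ + 2)) /
          (Real.sqrt L * (1 + P * h / σ₀)) ≥ D / L) ∧
    P * L ≤ Real.exp (g + ρ) := by
  have hdispersion := sqrt_snr_dispersion_div_le_exp hσ₀ (mul_nonneg hP hh) hς hη ha hb
  have hL : 0 ≤ L := (exp_pos ς).le.trans hς
  refine ⟨hrate.trans (sub_le_sub_left ?_ _), ?_⟩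
  · rw [mul_div_assoc, mul_assoc c]
    exact mul_le_mul_of_nonneg_left hdispersion hc
  · rw [exp_add]
    exact mul_le_mul hg hρ hL (exp_pos g).le

/-- Every feasible point of the relaxed problem RP yields a feasible point of
the power–blocklength problem SP1 (the original finite-blocklength rate
constraint holds) whose energy objective `P·L` is upper bounded by
`exp(g + ρ)`. -/
theorem rp_feasible_implies_sp1_feasible
    (σ₀ h D c P L ς η a b g ρ : ℝ)
    (hσ₀ : 0 < σ₀) (hh : 0 ≤ h) (hD : 0 < D) (hc : 0 ≤ c)
    (hL1 : 1 ≤ L) (hP : 0 ≤ P)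
    (hς : Real.exp ς ≤ L)
    (hη : Real.exp η ≤ σ₀ + P * h)
    (ha : P * h ≤ Real.exp a)
    (hb : 2 * σ₀ + P * h ≤ Real.exp b)
    (hg : P ≤ Real.exp g)
    (hρ : L ≤ Real.exp ρ)
    (hrate : Real.logb 2 (1 + P * h / σ₀) -
        c * Real.sqrt 2 * Real.exp (a / 2 + b / 2 - η - ς / 2) ≥ D / L) :
    (Real.logb 2 (1 + P * h / σ₀) -
        c * Real.sqrt (2 * (P * h / σ₀) * (P * h / σ₀ + 2)) /
          (Real.sqrt L * (1 + P * h / σ₀)) ≥ D / L) ∧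
    P * L ≤ Real.exp (g + ρ) :=
  rp_feasible_implies_sp1_feasible_general σ₀ h D c P L ς η a b g ρ hσ₀ hh hc hP hς hη ha hb hg hρ
    hrate
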